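/- arXiv:2605.17112 — 2 statements merged into one kernel-verified Lean document; each statement's English description precedes it below -/
import Mathlib

section
/- (β-unit case) If σ | N ⊙ Δ ⊢_m ⋆_m : I_m and ρ | M ⊙ Γ ⊢_m e : A are derivable, then ρ, q·σ | M, N ⊙ Γ, Δ ⊢_m e : A is derivable; consequently the right-hand side of the unit β-rule is well typed with the same type and grades as the corresponding let-unit redex. -/
/-- A preordered grade semiring: a semiring with a preorder under which
addition and multiplication are monotone. -/
class GradeSemiring (Q : Type) extends Semiring Q, Preorder Q where
  mul_mono : ∀ {a b c d : Q}, a ≤ b → c ≤ d → a * c ≤ b * d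
  add_mono : ∀ {a b c d : Q}, a ≤ b → c ≤ d → a + c ≤ b + d

/-- Types of the graded modal type system. -/
inductive Ty (Mode Q : Type) : Type where
  | unit   : Mode → Ty Mode Q                                -- I_m
  | tensor : Ty Mode Q → Ty Mode Q → Ty Mode Q               -- A₁ ⊗ A₂
  | arrow  : Ty Mode Q → Q → Mode → Ty Mode Q → Ty Mode Q    -- B^{q:m} ⊸ A
  | sum    : Ty Mode Q → Ty Mode Q → Ty Mode Q               -- A₁ ⊕ A₂
  | up     : Mode → Mode → Ty Mode Q → Ty Mode Q             -- ↑_{m≤n} A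
  | down   : Q → Mode → Mode → Ty Mode Q → Ty Mode Q         -- ↓^q_{n≤m} A

/-- Terms, with named (natural-number) variables. -/
inductive Tm (Mode Q : Type) : Type where
  | var : ℕ → Tm Mode Q
  | star : Mode → Tm Mode Q                                    -- ⋆_m
  | letUnit : Q → Tm Mode Q → Tm Mode Q → Tm Mode Q            -- let ⋆ = t in e
  | pair : Tm Mode Q → Tm Mode Q → Tm Mode Q                   -- (t₁, t₂)
  | letPair : Q → Tm Mode Q → ℕ → ℕ → Tm Mode Q → Tm Mode Q    -- let (x₁,x₂) = p in e
  | lam : ℕ → Tm Mode Q → Tm Mode Q                            -- λx.e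
  | app : Tm Mode Q → Tm Mode Q → Tm Mode Q
  | inl : Tm Mode Q → Tm Mode Q
  | inr : Tm Mode Q → Tm Mode Q
  | case : Tm Mode Q → ℕ → Tm Mode Q → ℕ → Tm Mode Q → Tm Mode Q
  | raise : Mode → Mode → Tm Mode Q → Tm Mode Q                -- ↑_{m≤n} t
  | lower : Mode → Mode → Tm Mode Q → Tm Mode Q                -- eliminator of ↑
  | drop : Q → Mode → Mode → Tm Mode Q → Tm Mode Q             -- ↓^q_{n≤m} t
  | letDrop : Tm Mode Q → ℕ → Tm Mode Q → Tm Mode Q            -- let ↓x = s in e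

/-- Simultaneous substitution (binders shield their bound variable). -/
def Tm.subst {Mode Q : Type} (f : ℕ → Tm Mode Q) : Tm Mode Q → Tm Mode Q
  | .var x => f x
  | .star m => .star m
  | .letUnit q t e => .letUnit q (t.subst f) (e.subst f)
  | .pair t₁ t₂ => .pair (t₁.subst f) (t₂.subst f)
  | .letPair q t x₁ x₂ e =>
      .letPair q (t.subst f) x₁ x₂
        (e.subst (fun y => if y = x₁ ∨ y = x₂ then .var y else f y))
  | .lam x e => .lam x (e.subst (fun y => if y = x then .var y else f y))
  | .app t u => .app (t.subst f) (u.subst f)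
  | .inl t => .inl (t.subst f)
  | .inr t => .inr (t.subst f)
  | .case s x₁ e₁ x₂ e₂ =>
      .case (s.subst f)
        x₁ (e₁.subst (fun y => if y = x₁ then .var y else f y))
        x₂ (e₂.subst (fun y => if y = x₂ then .var y else f y))
  | .raise m n t => .raise m n (t.subst f)
  | .lower m n t => .lower m n (t.subst f)
  | .drop q n m t => .drop q n m (t.subst f)
  | .letDrop s x e =>
      .letDrop (s.subst f) x (e.subst (fun y => if y = x then .var y else f y))

/-- Single substitution [t/x]e. -/
def Tm.subst1 {Mode Q : Type} (t : Tm Mode Q) (x : ℕ) (e : Tm Mode Q) : Tm Mode Q :=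
  e.subst (fun y => if y = x then t else .var y)

/-- Simultaneous substitution [t₁/x₁, t₂/x₂]e. -/
def Tm.subst2 {Mode Q : Type} (t₁ : Tm Mode Q) (x₁ : ℕ) (t₂ : Tm Mode Q) (x₂ : ℕ)
    (e : Tm Mode Q) : Tm Mode Q :=
  e.subst (fun y => if y = x₁ then t₁ else if y = x₂ then t₂ else .var y)

/-- A context entry: variable name, grade, mode, type
(i.e. an entry of ρ | M ⊙ Γ, kept in parallel). -/
abbrev Entry (Mode Q : Type) := ℕ × Q × Mode × Ty Mode Q

abbrev Ctx (Mode Q : Type) := List (Entry Mode Q)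

/-- Scalar multiplication of the grade vector of a context, pointwise on the left. -/
def Ctx.scale {Mode Q : Type} [GradeSemiring Q] (q : Q) (Γ : Ctx Mode Q) : Ctx Mode Q :=
  Γ.map (fun en => (en.1, q * en.2.1, en.2.2.1, en.2.2.2))

/-- Pointwise order on grade vectors: same variables, modes and types, grades ≤. -/
def Ctx.le {Mode Q : Type} [GradeSemiring Q] (Γ Γ' : Ctx Mode Q) : Prop :=
  List.Forall₂ (fun a b => a.1 = b.1 ∧ a.2.1 ≤ b.2.1 ∧ a.2.2.1 = b.2.2.1 ∧ a.2.2.2 = b.2.2.2) Γ Γ'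

/-- Parameters of the graded modal type system: which modes admit weakening,
which types live at which mode, and the contraction ideal at each mode. -/
structure Spec (Mode Q : Type) [PartialOrder Mode] [GradeSemiring Q] where
  Weak : Mode → Prop
  TypeAt : Mode → Ty Mode Q → Prop
  Cont : Mode → Set Q

/-- Typing judgment ρ | M ⊙ Γ ⊢_m t : A of the graded modal type system. -/
inductive Typing {Mode Q : Type} [PartialOrder Mode] [GradeSemiring Q]
    (S : Spec Mode Q) : Ctx Mode Q → Mode → Tm Mode Q → Ty Mode Q → Prop where
  | var {x m A} : Typing S [(x, 1, m, A)] m (.var x) A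
  | unitI {m} : Typing S [] m (.star m) (.unit m)
  | unitE {Δ Γ : Ctx Mode Q} {m q t e A} :
      Typing S Δ m t (.unit m) → Typing S Γ m e A →
      Typing S (Γ ++ Ctx.scale q Δ) m (.letUnit q t e) A
  | pairI {Δ₁ Δ₂ : Ctx Mode Q} {m t₁ t₂ A₁ A₂} :
      Typing S Δ₁ m t₁ A₁ → Typing S Δ₂ m t₂ A₂ →
      Typing S (Δ₁ ++ Δ₂) m (.pair t₁ t₂) (.tensor A₁ A₂)
  | pairE {Γ Δ : Ctx Mode Q} {m n q x₁ x₂ e p A A₁ A₂} :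
      Typing S (Γ ++ [(x₁, q, m, A₁), (x₂, q, m, A₂)]) n e A →
      Typing S Δ m p (.tensor A₁ A₂) →
      Typing S (Γ ++ Ctx.scale q Δ) n (.letPair q p x₁ x₂ e) A
  | arrowI {Γ : Ctx Mode Q} {n m q x B e A} :
      Typing S (Γ ++ [(x, q, n, B)]) n e A →
      Typing S Γ n (.lam x e) (.arrow B q m A)
  | arrowE {Γ Δ : Ctx Mode Q} {n m q f t B A} :
      Typing S Γ n f (.arrow B q m A) → Typing S Δ m t B →
      Typing S (Γ ++ Ctx.scale q Δ) n (.app f t) A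
  | sumIL {Δ : Ctx Mode Q} {n t A₁ A₂} :
      Typing S Δ n t A₁ → Typing S Δ n (.inl t) (.sum A₁ A₂)
  | sumIR {Δ : Ctx Mode Q} {n t A₁ A₂} :
      Typing S Δ n t A₂ → Typing S Δ n (.inr t) (.sum A₁ A₂)
  | sumE {Γ Δ : Ctx Mode Q} {m n q s x₁ e₁ x₂ e₂ A A₁ A₂} :
      1 ≤ q →
      Typing S Δ n s (.sum A₁ A₂) →
      Typing S (Γ ++ [(x₁, q, n, A₁)]) m e₁ A →
      Typing S (Γ ++ [(x₂, q, n, A₂)]) m e₂ A →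
      Typing S (Γ ++ Ctx.scale q Δ) m (.case s x₁ e₁ x₂ e₂) A
  | raiseI {Γ : Ctx Mode Q} {m n t A} : m ≤ n → Typing S Γ m t A →
      Typing S Γ n (.raise m n t) (.up m n A)
  | raiseE {Γ : Ctx Mode Q} {m n s A} : m ≤ n → Typing S Γ n s (.up m n A) →
      Typing S Γ m (.lower m n s) A
  | dropI {Δ : Ctx Mode Q} {n m q t A} : n ≤ m → Typing S Δ m t A →
      Typing S (Ctx.scale q Δ) n (.drop q n m t) (.down q n m A)
  | dropE {Γ Δ : Ctx Mode Q} {l n m q s x e A B} :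
      l ≤ n → n ≤ m →
      Typing S Δ n s (.down q n m A) →
      Typing S (Γ ++ [(x, q, m, A)]) l e B →
      Typing S (Γ ++ Δ) l (.letDrop s x e) B
  | weak {Γ : Ctx Mode Q} {m n x B t A} :
      S.Weak n → m ≤ n → S.TypeAt n B → Typing S Γ m t A →
      Typing S (Γ ++ [(x, 0, n, B)]) m t A
  | sub {Γ Γ' : Ctx Mode Q} {m t A} :
      Typing S Γ m t A → Ctx.le Γ Γ' → Typing S Γ' m t A
  | cont {Γ : Ctx Mode Q} {m n r₁ r₂ y₁ y₂ z B t A} :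
      r₁ ∈ S.Cont n → r₂ ∈ S.Cont n →
      Typing S (Γ ++ [(y₁, r₁, n, B), (y₂, r₂, n, B)]) m t A →
      Typing S (Γ ++ [(z, r₁ + r₂, n, B)]) m
        (t.subst (fun v => if v = y₁ ∨ v = y₂ then .var z else .var v)) A
  | exch {Γ Γ' : Ctx Mode Q} {m t A} :
      Γ.Perm Γ' → Typing S Γ m t A → Typing S Γ' m t A

/-!
A derivation of `⋆` starts from the empty context, and the only rules that can produce a star
term are weakening, subsumption, contraction and exchange. Hence every entry of its context is
*discardable* at the judgement mode `m`: it lives at a weakenable mode `n ≥ m`, its type is a type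
at `n`, and its grade is `≥ 0`. Discardability survives scaling the grade by `q`, and a
discardable entry can be added to any derivation at mode `m` by weakening it in at grade `0` and
raising the grade by subsumption.
-/

theorem List.Forall₂.exists_of_mem_right {α β : Type*} {R : α → β → Prop} {l₁ : List α}
    {l₂ : List β} (h : List.Forall₂ R l₁ l₂) {b : β} (hb : b ∈ l₂) :
    ∃ a ∈ l₁, R a b := by
  induction h with
  | nil => simp at hb
  | cons hr _ ih =>
    rcases List.mem_cons.1 hb with rfl | hb
    · exact ⟨_, List.mem_cons_self, hr⟩
    · obtain ⟨a, ha, har⟩ := ih hb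
      exact ⟨a, List.mem_cons_of_mem _ ha, har⟩

theorem Tm.eq_star_of_subst_eq_star {Mode Q : Type} {f : ℕ → Tm Mode Q}
    (hf : ∀ v, ∃ w, f v = .var w) {t : Tm Mode Q} {n : Mode} (h : t.subst f = .star n) :
    t = .star n := by
  cases t with
  | var x =>
    obtain ⟨w, hw⟩ := hf x
    simp [Tm.subst, hw] at h
  | _ => simp_all [Tm.subst]

theorem GradeSemiring.mul_nonneg_of_nonneg {Q : Type} [GradeSemiring Q] (q : Q) {r : Q}
    (hr : 0 ≤ r) : 0 ≤ q * r := by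
  simpa using GradeSemiring.mul_mono (le_refl q) hr

theorem GradeSemiring.add_nonneg_of_nonneg {Q : Type} [GradeSemiring Q] {r₁ r₂ : Q}
    (h₁ : 0 ≤ r₁) (h₂ : 0 ≤ r₂) : 0 ≤ r₁ + r₂ := by
  simpa using GradeSemiring.add_mono h₁ h₂

theorem Ctx.le_refl {Mode Q : Type} [GradeSemiring Q] (Γ : Ctx Mode Q) : Ctx.le Γ Γ :=
  List.forall₂_same.2 fun _ _ => ⟨rfl, le_rfl, rfl, rfl⟩

theorem Ctx.le_append_singleton {Mode Q : Type} [GradeSemiring Q] (Γ : Ctx Mode Q) {x : ℕ}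
    {r r' : Q} {n : Mode} {B : Ty Mode Q} (hr : r ≤ r') :
    Ctx.le (Γ ++ [(x, r, n, B)]) (Γ ++ [(x, r', n, B)]) :=
  List.rel_append (Ctx.le_refl Γ) (.cons ⟨rfl, hr, rfl, rfl⟩ .nil)

section

variable {Mode Q : Type} [PartialOrder Mode] [GradeSemiring Q] {S : Spec Mode Q}

structure Discardable (S : Spec Mode Q) (m : Mode) (en : Entry Mode Q) : Prop where
  weak : S.Weak en.2.2.1
  le_mode : m ≤ en.2.2.1
  typeAt : S.TypeAt en.2.2.1 en.2.2.2
  nonneg : 0 ≤ en.2.1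

theorem Discardable.scale {m : Mode} {en : Entry Mode Q} (h : Discardable S m en) (q : Q) :
    Discardable S m (en.1, q * en.2.1, en.2.2.1, en.2.2.2) :=
  ⟨h.weak, h.le_mode, h.typeAt, GradeSemiring.mul_nonneg_of_nonneg q h.nonneg⟩

theorem Typing.discardable_of_eq_star {Δ : Ctx Mode Q} {m n : Mode} {t : Tm Mode Q}
    {A : Ty Mode Q} (h : Typing S Δ m t A) (ht : t = .star n) :
    ∀ en ∈ Δ, Discardable S m en := by
  induction h with
  | unitI => simp
  | weak hw hle hT _ ih =>
    intro en hen
    rcases List.mem_append.1 hen with hen | hen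
    · exact ih ht en hen
    · obtain rfl := List.mem_singleton.1 hen
      exact ⟨hw, hle, hT, le_rfl⟩
  | sub _ hle ih =>
    intro en hen
    obtain ⟨a, ha, -, hr, hn, hB⟩ := hle.exists_of_mem_right hen
    have hd := ih ht a ha
    exact ⟨hn ▸ hd.weak, hn ▸ hd.le_mode, hn ▸ hB ▸ hd.typeAt, hd.nonneg.trans hr⟩
  | @cont Γ _ _ _ _ y₁ y₂ _ _ _ _ _ _ _ ih =>
    have hd := ih (Tm.eq_star_of_subst_eq_star
      (fun v => by by_cases hv : v = y₁ ∨ v = y₂ <;> simp [hv]) ht)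
    intro en hen
    rcases List.mem_append.1 hen with hen | hen
    · exact hd en (List.mem_append_left _ hen)
    · obtain rfl := List.mem_singleton.1 hen
      have hd₁ := hd _ (List.mem_append_right Γ (List.mem_cons_self ..))
      have hd₂ := hd _ (List.mem_append_right Γ (List.mem_cons_of_mem _ (List.mem_cons_self ..)))
      exact ⟨hd₁.weak, hd₁.le_mode, hd₁.typeAt,
        GradeSemiring.add_nonneg_of_nonneg hd₁.nonneg hd₂.nonneg⟩
  | exch hp _ ih => exact fun en hen => ih ht en (hp.mem_iff.2 hen)
  | _ => cases ht

theorem Typing.append_discardable {Γ : Ctx Mode Q} {m : Mode} {e : Tm Mode Q} {A : Ty Mode Q}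
    {en : Entry Mode Q} (hd : Discardable S m en) (h : Typing S Γ m e A) :
    Typing S (Γ ++ [en]) m e A :=
  (Typing.weak hd.weak hd.le_mode hd.typeAt h).sub (Ctx.le_append_singleton Γ hd.nonneg)

theorem Typing.append_scale_of_discardable {Δ Γ : Ctx Mode Q} {m : Mode} {e : Tm Mode Q}
    {A : Ty Mode Q} (q : Q) (hΔ : ∀ en ∈ Δ, Discardable S m en) (h : Typing S Γ m e A) :
    Typing S (Γ ++ Ctx.scale q Δ) m e A := by
  induction Δ generalizing Γ with
  | nil => simpa [Ctx.scale] using h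
  | cons d Δ ih =>
    have h' := ih (fun en hen => hΔ en (List.mem_cons_of_mem _ hen))
      (h.append_discardable ((hΔ d List.mem_cons_self).scale q))
    simpa [Ctx.scale] using h'

end

/-- (β-unit case) If σ | N ⊙ Δ ⊢_m ⋆_m : I_m and ρ | M ⊙ Γ ⊢_m e : A are derivable,
then ρ, q·σ | M, N ⊙ Γ, Δ ⊢_m e : A is derivable. -/
theorem beta_unit_case {Mode Q : Type} [PartialOrder Mode] [GradeSemiring Q]
    (S : Spec Mode Q) {Δ Γ : Ctx Mode Q} {m : Mode} {q : Q}
    {e : Tm Mode Q} {A : Ty Mode Q}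
    (h₁ : Typing S Δ m (.star m) (.unit m))
    (h₂ : Typing S Γ m e A) :
    Typing S (Γ ++ Ctx.scale q Δ) m e A :=
  h₂.append_scale_of_discardable q (h₁.discardable_of_eq_star rfl)
end

section
/- (β-raise case) For modes m ≤ n, if ρ | M ⊙ Γ ⊢_n ↑_{m≤n} t : ↑_{m≤n} A is derivable, then ρ | M ⊙ Γ ⊢_m t : A is derivable. -/
theorem raise_inv {Mode Q : Type} [PartialOrder Mode] [GradeSemiring Q]
    (S : Spec Mode Q) {Γ : Ctx Mode Q} {mo : Mode} {tt : Tm Mode Q} {AA : Ty Mode Q}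
    (h : Typing S Γ mo tt AA) :
    ∀ {m n : Mode} {t : Tm Mode Q} {A : Ty Mode Q},
      tt = .raise m n t → AA = .up m n A → m ≤ mo → Typing S Γ m t A := by
  induction h with
  | raiseI hle ht ih =>
    intro m n t A het heA _
    cases het; cases heA; exact ht
  | weak hw hle hT ht ih =>
    intro m n t A het heA hmo
    exact Typing.weak hw (le_trans hmo hle) hT (ih het heA hmo)
  | sub ht hle ih =>
    intro m n t A het heA hmo
    exact Typing.sub (ih het heA hmo) hle
  | cont hr1 hr2 ht ih =>
    intro m n t A het heA hmo
    rename_i Γ' mm nn r₁ r₂ y₁ y₂ z B t0 A0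
    cases t0 with
    | raise m' n' t' =>
      simp only [Tm.subst] at het
      obtain ⟨hm, hn, hts⟩ := Tm.raise.inj het
      subst hm; subst hn; subst hts
      exact Typing.cont hr1 hr2 (ih rfl heA hmo)
    | var x =>
      simp only [Tm.subst] at het
      split at het <;> exact absurd het (by simp)
    | _ => simp [Tm.subst] at het
  | exch hperm ht ih =>
    intro m n t A het heA hmo
    exact Typing.exch hperm (ih het heA hmo)
  | _ => intro m n t A het heA hmo <;> simp_all

/-- (β-raise case) For modes m ≤ n, if ρ | M ⊙ Γ ⊢_n ↑_{m≤n} t : ↑_{m≤n} A is derivable,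
then ρ | M ⊙ Γ ⊢_m t : A is derivable. -/
theorem beta_raise_case {Mode Q : Type} [PartialOrder Mode] [GradeSemiring Q]
    (S : Spec Mode Q) {Γ : Ctx Mode Q} {m n : Mode} {t : Tm Mode Q} {A : Ty Mode Q}
    (hmn : m ≤ n)
    (h : Typing S Γ n (.raise m n t) (.up m n A)) :
    Typing S Γ m t A := by
  exact raise_inv S h rfl rfl hmn
end
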